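/- arXiv:cs/0606091 — 4 statements merged into one kernel-verified Lean document; each statement's English description precedes it below -/
import Mathlib

section
/- Let (W, ⊑) be a WQO, let Φ : (2^W)^m → 2^W be monotone (in each argument), and let g₁, …, g_m : 2^W → 2^W be monotone functions whose values are always upward-closed sets. Define F(V) = Φ(g₁(V), …, g_m(V)) and the approximants M₀ = ∅, M_{i+1} = F(M_i). Then there exists k such that M_k = M_{k+1} = lfp(F); in particular the least fixpoint of F is reached after finitely many iterations. -/
/-! For each `j` the sets `g j (M i)` form an increasing chain of upward-closed sets. Such a chain
stabilises: if it grew strictly forever, picking `x n ∈ U (n + 1) \ U n` would give a sequence with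
no increasing pair. Once the finitely many chains have stabilised, so has
`M (i + 1) = Φ (fun j => g j (M i))`, and an iterate of `∅` fixed by the monotone map `F` is its
least fixpoint. -/

open Filter Function

def IsWQO (W : Type*) [Preorder W] : Prop :=
  ∀ f : ℕ → W, ∃ i j : ℕ, i < j ∧ f i ≤ f j

def UpClosed {W : Type*} [Preorder W] (V : Set W) : Prop :=
  ∀ ⦃v w : W⦄, v ∈ V → v ≤ w → w ∈ V

theorem Filter.EventuallyConst.pi_of_finite {α ι : Type*} [Finite ι] {β : ι → Type*}
    {l : Filter α} {f : α → ∀ i, β i} (h : ∀ i, EventuallyConst (fun a => f a i) l) :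
    EventuallyConst f l := by
  simp only [l.basis_sets.eventuallyConst_iff, id] at h ⊢
  choose s hsl hs using h
  exact ⟨⋂ i, s i, iInter_mem.2 hsl, fun x hx y hy => funext fun i =>
    hs i x (Set.mem_iInter.1 hx i) y (Set.mem_iInter.1 hy i)⟩

theorem Monotone.isLeast_fixedPoints_iterate_bot {α : Type*} [Preorder α] [OrderBot α]
    {f : α → α} (hf : Monotone f) {n : ℕ} (hn : f^[n + 1] ⊥ = f^[n] ⊥) :
    IsLeast (fixedPoints f) (f^[n] ⊥) :=
  ⟨by rwa [iterate_succ_apply'] at hn,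
    fun x hx => (hf.iterate n bot_le).trans_eq (IsFixedPt.iterate hx n).eq⟩

namespace IsWQO

variable {W : Type*} [Preorder W]

theorem wellFoundedGT_upClosed (hW : IsWQO W) : WellFoundedGT {V : Set W // UpClosed V} := by
  rw [WellFoundedGT, isWellFounded_iff, wellFounded_iff_isEmpty_descending_chain]
  refine ⟨fun ⟨U, hU⟩ => ?_⟩
  choose x hx_mem hx_not_mem using fun n => Set.exists_of_ssubset (hU n)
  obtain ⟨i, j, hij, hle⟩ := hW x
  exact hx_not_mem j ((U j).2 (strictMono_nat_of_lt_succ hU |>.monotone hij (hx_mem i)) hle)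

theorem eventuallyConst_of_monotone_upClosed (hW : IsWQO W) {U : ℕ → Set W} (hU : Monotone U)
    (hup : ∀ i, UpClosed (U i)) : EventuallyConst U atTop := by
  have := hW.wellFoundedGT_upClosed
  obtain ⟨n, hn⟩ := WellFoundedGT.monotone_chain_condition
    (⟨fun i => ⟨U i, hup i⟩, hU⟩ : ℕ →o {V : Set W // UpClosed V})
  exact eventuallyConst_atTop.2 ⟨n, fun m hm => congrArg Subtype.val (hn m hm).symm⟩

end IsWQO

/-- Finite convergence of approximants for upward-guarded least fixpoints:
if `F(V) = Φ(g₁(V), …, g_m(V))` where `Φ` and the `gⱼ` are monotone and each `gⱼ`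
only takes upward-closed values, then the iteration `M₀ = ∅`, `M_{i+1} = F(M_i)`
stabilizes at the least fixpoint of `F` after finitely many steps. -/
theorem lfp_finite_convergence {W : Type*} [Preorder W] (hwqo : IsWQO W)
    {m : ℕ} (Φ : (Fin m → Set W) → Set W) (hΦ : Monotone Φ)
    (g : Fin m → Set W → Set W) (hg : ∀ j, Monotone (g j))
    (hgup : ∀ j V, UpClosed (g j V))
    (F : Set W → Set W) (hF : ∀ V, F V = Φ (fun j => g j V))
    (M : ℕ → Set W) (hM0 : M 0 = ∅) (hMs : ∀ i, M (i + 1) = F (M i)) :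
    ∃ k : ℕ, M (k + 1) = M k ∧ IsLeast {V : Set W | F V = V} (M k) := by
  have hF_mono : Monotone F := fun U V hUV => by simpa only [hF] using hΦ fun j => hg j hUV
  have hM_iterate : M = fun i => F^[i] ∅ := funext fun i => by
    induction i with
    | zero => exact hM0
    | succ i ih => rw [hMs, ih, iterate_succ_apply']
  have hM_mono : Monotone M := hM_iterate ▸ hF_mono.monotone_iterate_of_le_map (Set.empty_subset _)
  have hM_const : EventuallyConst (fun i => M (i + 1)) atTop := by
    simp only [hMs, hF]
    exact (EventuallyConst.pi_of_finite fun j =>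
      hwqo.eventuallyConst_of_monotone_upClosed ((hg j).comp hM_mono) fun i =>
        hgup j (M i)).comp Φ
  obtain ⟨k, hk⟩ := eventuallyConst_atTop_nat.1 hM_const
  have hstep : M (k + 1 + 1) = M (k + 1) := hk k le_rfl
  refine ⟨k + 1, hstep, ?_⟩
  subst hM_iterate
  exact hF_mono.isLeast_fixedPoints_iterate_bot hstep
end

section
/- Let (W, ⊑) be a WQO, let Φ : (2^W)^m → 2^W be monotone, and let g₁, …, g_m : 2^W → 2^W be monotone functions whose values are always downward-closed sets. Define F(V) = Φ(g₁(V), …, g_m(V)) and the approximants N₀ = W, N_{i+1} = F(N_i). Then there exists k such that N_k = N_{k+1} = gfp(F); the greatest fixpoint of F is reached after finitely many iterations. -/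
def DownClosed {W : Type*} [Preorder W] (V : Set W) : Prop :=
  ∀ ⦃v w : W⦄, w ∈ V → v ≤ w → v ∈ V

/-!
Downward-closed subsets of a WQO admit no infinite strictly descending chain: picking
`wₙ ∈ Dₙ \ Dₙ₊₁` along such a chain, the WQO property gives `i < j` with `wᵢ ≤ wⱼ ∈ Dᵢ₊₁`,
so `wᵢ ∈ Dᵢ₊₁`. Since `F` only sees its argument through the downward-closed tuple
`(g₁(V), …, g_m(V))`, which ranges over a finite product of such well-founded orders, this tuple
stabilises along the antitone approximants `Nᵢ`, hence so does `Nᵢ₊₁ = F(Nᵢ)`. An approximant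
that is a fixpoint contains every fixpoint `V = Fⁱ(V) ⊆ Fⁱ(W)`, so it is the greatest one.
-/

open Function

theorem IsWQO.wellFoundedLT_downClosed {W : Type*} [Preorder W] (hwqo : IsWQO W) :
    WellFoundedLT {D : Set W // DownClosed D} := by
  rw [WellFoundedLT, isWellFounded_iff, wellFounded_iff_isEmpty_descending_chain]
  refine ⟨fun ⟨D, hD⟩ => ?_⟩
  choose w hw_mem hw_not_mem using fun n => Set.exists_of_ssubset (hD n)
  obtain ⟨i, j, hij, hle⟩ := hwqo w
  have hD_anti : Antitone D := (strictAnti_nat_of_succ_lt hD).antitone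
  exact hw_not_mem i ((D (i + 1)).2 (hD_anti hij (hw_mem j)) hle)

theorem Monotone.isGreatest_fixedPoints_iterate_top {α : Type*} [Preorder α] [OrderTop α]
    {f : α → α} (hf : Monotone f) {k : ℕ} (hk : IsFixedPt f (f^[k] ⊤)) :
    IsGreatest (fixedPoints f) (f^[k] ⊤) :=
  ⟨hk, fun _ hx => (hx.iterate k).symm.le.trans ((hf.iterate k) le_top)⟩

theorem Monotone.exists_isFixedPt_iterate_top_of_eq_comp {α β : Type*} [Preorder α] [OrderTop α]
    [PartialOrder β] [WellFoundedLT β] {f : α → α} (hf : Monotone f) {G : α → β}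
    (hG : Monotone G) (Φ : β → α) (hfG : ∀ x, f x = Φ (G x)) : ∃ k, IsFixedPt f (f^[k] ⊤) := by
  obtain ⟨n, hn⟩ := WellFoundedLT.antitone_chain_condition
    (hG.comp_antitone (hf.antitone_iterate_of_map_le le_top))
  refine ⟨n + 1, ?_⟩
  calc f (f^[n + 1] ⊤) = Φ (G (f^[n + 1] ⊤)) := hfG _
    _ = Φ (G (f^[n] ⊤)) := congrArg Φ (hn (n + 1) n.le_succ).symm
    _ = f^[n + 1] ⊤ := (hfG _).symm.trans (iterate_succ_apply' f n ⊤).symm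

/-- Finite convergence of approximants for downward-guarded greatest fixpoints:
if `F(V) = Φ(g₁(V), …, g_m(V))` where `Φ` and the `gⱼ` are monotone and each `gⱼ`
only takes downward-closed values, then the iteration `N₀ = W`, `N_{i+1} = F(N_i)`
stabilizes at the greatest fixpoint of `F` after finitely many steps. -/
theorem gfp_finite_convergence {W : Type*} [Preorder W] (hwqo : IsWQO W)
    {m : ℕ} (Φ : (Fin m → Set W) → Set W) (hΦ : Monotone Φ)
    (g : Fin m → Set W → Set W) (hg : ∀ j, Monotone (g j))
    (hgdn : ∀ j V, DownClosed (g j V))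
    (F : Set W → Set W) (hF : ∀ V, F V = Φ (fun j => g j V))
    (N : ℕ → Set W) (hN0 : N 0 = Set.univ) (hNs : ∀ i, N (i + 1) = F (N i)) :
    ∃ k : ℕ, N (k + 1) = N k ∧ IsGreatest {V : Set W | F V = V} (N k) := by
  have hF_mono : Monotone F := fun A B hAB => by
    simpa only [hF] using hΦ fun j => hg j hAB
  have hN : N = fun i => F^[i] ⊤ := funext fun i => by
    induction i with
    | zero => exact hN0
    | succ i ih => rw [hNs, ih, iterate_succ_apply']
  have := hwqo.wellFoundedLT_downClosed
  obtain ⟨k, hk⟩ := hF_mono.exists_isFixedPt_iterate_top_of_eq_comp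
    (G := fun V j => (⟨g j V, hgdn j V⟩ : {D : Set W // DownClosed D}))
    (fun _ _ hAB j => hg j hAB) (fun D => Φ fun j => (D j).1) hF
  subst hN
  exact ⟨k, (iterate_succ_apply' F k ⊤).trans hk, hF_mono.isGreatest_fixedPoints_iterate_top hk⟩
end

section
/- Let (W, ⊑) be a WQO and F : 2^W → 2^W a monotone function such that F(V) = F(C↑(V)) for all V ⊆ W. Then the least fixpoint of the function V ↦ S ∪ F(V) (for any fixed S ⊆ W) is reached in finitely many iterations starting from ∅. -/
def Cup {W : Type*} [Preorder W] (V : Set W) : Set W := {w | ∃ v ∈ V, v ≤ w}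

section UpwardClosure

variable {W : Type*} [Preorder W]

theorem cup_mono : Monotone (Cup : Set W → Set W) := by
  rintro A B hAB w ⟨v, hv, hvw⟩
  exact ⟨v, hAB hv, hvw⟩

theorem isUpperSet_cup (V : Set W) : IsUpperSet (Cup V) := by
  rintro a b hab ⟨v, hv, hva⟩
  exact ⟨v, hv, hva.trans hab⟩

theorem IsWQO.exists_cup_succ_eq (hW : IsWQO W) {M : ℕ → Set W} (hM : Monotone M) :
    ∃ k, Cup (M (k + 1)) = Cup (M k) := by
  by_contra! hne
  have hnew : ∀ i, ∃ w ∈ Cup (M (i + 1)), w ∉ Cup (M i) := fun i =>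
    Set.not_subset.mp fun hsub => hne i (hsub.antisymm (cup_mono (hM i.le_succ)))
  choose w hw_mem hw_new using hnew
  obtain ⟨i, j, hij, hle⟩ := hW w
  exact hw_new j (isUpperSet_cup _ hle (cup_mono (hM hij) (hw_mem i)))

end UpwardClosure

/-- If `F` is monotone and insensitive to upward closure (`F(V) = F(C↑(V))`),
then for any `S` the least fixpoint of `V ↦ S ∪ F(V)` is reached in finitely many
iterations starting from `∅`. -/
theorem prestar_finite_convergence {W : Type*} [Preorder W] (hwqo : IsWQO W)
    (F : Set W → Set W) (hF : Monotone F) (hFC : ∀ V, F V = F (Cup V))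
    (S : Set W) (M : ℕ → Set W) (hM0 : M 0 = ∅)
    (hMs : ∀ i, M (i + 1) = S ∪ F (M i)) :
    ∃ k : ℕ, M (k + 1) = M k ∧ IsLeast {V : Set W | S ∪ F V = V} (M k) := by
  have hG : Monotone fun V => S ∪ F V := fun _ _ h => Set.union_subset_union_right S (hF h)
  have hM : Monotone M := monotone_nat_of_le_succ fun n =>
    hG.seq_le_seq n (by simp [hM0]) (fun k _ => (hMs k).le) (fun k _ => (hMs (k + 1)).ge)
  obtain ⟨k, hk⟩ := hwqo.exists_cup_succ_eq hM
  have hfix : S ∪ F (M (k + 1)) = M (k + 1) := by rw [hFC, hk, ← hFC, ← hMs]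
  refine ⟨k + 1, by rw [hMs, hfix], hfix, fun V hV => ?_⟩
  exact hG.seq_le_seq (k + 1) (by simp [hM0]) (fun j _ => (hMs j).le) (fun _ _ => hV.le)
end

section
/- Let (W, ⊑) be a WQO and let F : 2^W → 2^W be defined by F(X) = V₂ ∩ (G(K↓(X)) ∪ V₁) where G : 2^W → 2^W is monotone and V₁, V₂ ⊆ W are fixed. Then the greatest fixpoint of F is reached after finitely many iterations from W: there is k with N_k = N_{k+1} = gfp(F), where N₀ = W and N_{i+1} = F(N_i). -/
def Kdn {W : Type*} [Preorder W] (V : Set W) : Set W := {w | ∀ x, x ≤ w → x ∈ V}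

section Kdn

variable {W : Type*} [Preorder W]

theorem Kdn_mono : Monotone (Kdn (W := W)) :=
  fun _ _ hAB _ hw x hx => hAB (hw x hx)

theorem isLowerSet_Kdn (V : Set W) : IsLowerSet (Kdn V) :=
  fun _ _ hxy hy z hz => hy z (hz.trans hxy)

end Kdn

theorem IsWQO.exists_succ_eq_of_antitone {W : Type*} [Preorder W] (hwqo : IsWQO W)
    {D : ℕ → Set W} (hD : Antitone D) (hlow : ∀ i, IsLowerSet (D i)) :
    ∃ k, D (k + 1) = D k := by
  by_contra! hstrict
  have hwit : ∀ i, ∃ w, w ∈ D i ∧ w ∉ D (i + 1) := fun i =>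
    Set.not_subset.mp fun hsub => hstrict i ((hD i.le_succ).antisymm hsub)
  choose w hw_mem hw_not_mem using hwit
  obtain ⟨i, j, hij, hle⟩ := hwqo w
  exact hw_not_mem i (hlow (i + 1) hle (hD hij (hw_mem j)))

section Iterates

variable {α : Type*} [Preorder α] [OrderTop α] {F : α → α} {N : ℕ → α}

theorem antitone_of_iterate_from_top (hF : Monotone F) (hN0 : N 0 = ⊤)
    (hNs : ∀ i, N (i + 1) = F (N i)) : Antitone N := by
  refine antitone_nat_of_succ_le fun i => ?_
  induction i with
  | zero => exact hN0 ▸ le_top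
  | succ i ih => exact (hNs (i + 1)).trans_le ((hF ih).trans_eq (hNs i).symm)

theorem le_iterate_from_top_of_le_map (hF : Monotone F) (hN0 : N 0 = ⊤)
    (hNs : ∀ i, N (i + 1) = F (N i)) {X : α} (hX : X ≤ F X) (i : ℕ) : X ≤ N i := by
  induction i with
  | zero => exact hN0 ▸ le_top
  | succ i ih => exact hNs i ▸ hX.trans (hF ih)

end Iterates

/-- The greatest fixpoint of `F(X) = V₂ ∩ (G(K↓(X)) ∪ V₁)` over a WQO is reached
after finitely many iterations from `W`. -/
theorem safety_gfp_finite_convergence {W : Type*} [Preorder W] (hwqo : IsWQO W)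
    (G : Set W → Set W) (hG : Monotone G) (V₁ V₂ : Set W)
    (F : Set W → Set W) (hF : ∀ X, F X = V₂ ∩ (G (Kdn X) ∪ V₁))
    (N : ℕ → Set W) (hN0 : N 0 = Set.univ) (hNs : ∀ i, N (i + 1) = F (N i)) :
    ∃ k : ℕ, N (k + 1) = N k ∧ IsGreatest {X : Set W | F X = X} (N k) := by
  have hFmono : Monotone F := fun A B hAB => by
    rw [hF, hF]
    exact Set.inter_subset_inter_right _ (Set.union_subset_union_left _ (hG (Kdn_mono hAB)))
  have hNanti : Antitone N := antitone_of_iterate_from_top hFmono hN0 hNs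
  obtain ⟨k, hk⟩ := hwqo.exists_succ_eq_of_antitone (Kdn_mono.comp_antitone hNanti)
    fun i => isLowerSet_Kdn (N i)
  have hstable : N (k + 2) = N (k + 1) :=
    calc N (k + 2) = F (N (k + 1)) := hNs (k + 1)
      _ = F (N k) := by rw [hF, hF]; exact congrArg (fun D => V₂ ∩ (G D ∪ V₁)) hk
      _ = N (k + 1) := (hNs k).symm
  exact ⟨k + 1, hstable, (hNs (k + 1)).symm.trans hstable,
    fun X hX => le_iterate_from_top_of_le_map hFmono hN0 hNs hX.ge (k + 1)⟩
end
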